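/- Let f(x) = x²/2 − l_{σ,c}(x). Then: (i) for every y ∈ ℝ the set { x·y − f(x) : x ∈ ℝ } is bounded above, so φ(y) := sup_{x ∈ ℝ} (x·y − f(x)) − y²/2 is a well-defined real number (the implicit regularizer of HOW); (ii) for every x ∈ ℝ, the infimum over y ∈ ℝ of (x − y)²/2 + φ(y) equals l_{σ,c}(x); and (iii) this infimum is attained at y = max{0, |x| − |x|·e^{(c²−x²)/σ²}}·sign(x). -/
import Mathlib

set_option maxHeartbeats 1000000


/-- The hybrid ordinary-Welsch (HOW) function with parameters `σ, c > 0`. -/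
noncomputable def how (σ c x : ℝ) : ℝ :=
  if |x| ≤ c then x ^ 2 / 2
  else σ ^ 2 / 2 * (1 - Real.exp ((c ^ 2 - x ^ 2) / σ ^ 2)) + c ^ 2 / 2

/-- The proximity point `max{0, |x| − |x|·e^{(c²−x²)/σ²}}·sign(x)` at which the
Moreau-envelope infimum for HOW is attained. -/
noncomputable def howProx (σ c x : ℝ) : ℝ :=
  max 0 (|x| - |x| * Real.exp ((c ^ 2 - x ^ 2) / σ ^ 2)) * Real.sign x

private lemma how_abs (σ c x : ℝ) : how σ c |x| = how σ c x := by
  simp [how, abs_abs, sq_abs]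

private lemma how_neg (σ c x : ℝ) : how σ c (-x) = how σ c x := by
  simp [how, abs_neg, neg_sq]

private lemma howProx_neg (σ c x : ℝ) : howProx σ c (-x) = -howProx σ c x := by
  simp [howProx, abs_neg, neg_sq, Real.sign_neg, mul_neg]

private lemma key_nn (σ c : ℝ) (hσ : 0 < σ) (hc : 0 < c) (x z : ℝ)
    (hx : 0 ≤ x) (hz : 0 ≤ z) :
    z * howProx σ c x - (z ^ 2 / 2 - how σ c z)
      ≤ x * howProx σ c x - (x ^ 2 / 2 - how σ c x) := by
  have hσ2 : (0:ℝ) < σ ^ 2 := by positivity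
  set Ex := Real.exp ((c ^ 2 - x ^ 2) / σ ^ 2) with hEx
  set Ez := Real.exp ((c ^ 2 - z ^ 2) / σ ^ 2) with hEz
  have hExpos : 0 < Ex := Real.exp_pos _
  have hEzpos : 0 < Ez := Real.exp_pos _
  have habsx : |x| = x := abs_of_nonneg hx
  have habsz : |z| = z := abs_of_nonneg hz
  rcases le_or_gt x c with hxc | hxc
  · -- y* = 0, f x = 0, need f z ≥ 0
    have hE1 : 1 ≤ Ex := Real.one_le_exp (div_nonneg (by nlinarith) hσ2.le)
    have hprox : howProx σ c x = 0 := by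
      rw [howProx, habsx, ← hEx, max_eq_left (by nlinarith), zero_mul]
    have hfx : how σ c x = x ^ 2 / 2 := by
      rw [how, if_pos (by rw [habsx]; exact hxc)]
    rw [hprox, hfx]
    rcases le_or_gt z c with hzc | hzc
    · have hfz : how σ c z = z ^ 2 / 2 := by
        rw [how, if_pos (by rw [habsz]; exact hzc)]
      rw [hfz]; nlinarith [sq_nonneg x]
    · have hfz : how σ c z = σ ^ 2 / 2 * (1 - Ez) + c ^ 2 / 2 := by
        rw [how, if_neg (by rw [habsz]; exact not_le.2 hzc), ← hEz]
      have h3 : c ^ 2 - z ^ 2 + σ ^ 2 ≤ σ ^ 2 * Ez := by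
        have h := Real.add_one_le_exp ((c ^ 2 - z ^ 2) / σ ^ 2)
        rw [← hEz] at h
        have h2 := mul_le_mul_of_nonneg_left h hσ2.le
        have hkz : σ ^ 2 * ((c ^ 2 - z ^ 2) / σ ^ 2) = c ^ 2 - z ^ 2 :=
          mul_div_cancel₀ _ hσ2.ne'
        calc c ^ 2 - z ^ 2 + σ ^ 2
            = σ ^ 2 * ((c ^ 2 - z ^ 2) / σ ^ 2) + σ ^ 2 := by rw [hkz]
          _ = σ ^ 2 * ((c ^ 2 - z ^ 2) / σ ^ 2 + 1) := by ring
          _ ≤ σ ^ 2 * Ez := h2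
      rw [hfz]; nlinarith [h3]
  · have hxpos : 0 < x := hc.trans hxc
    have hE1 : Ex ≤ 1 := Real.exp_le_one_iff.2 (div_nonpos_of_nonpos_of_nonneg (by nlinarith) hσ2.le)
    have hprox : howProx σ c x = x * (1 - Ex) := by
      rw [howProx, habsx, ← hEx, Real.sign_of_pos hxpos, mul_one,
        max_eq_right (by nlinarith)]
      ring
    have hfx : how σ c x = σ ^ 2 / 2 * (1 - Ex) + c ^ 2 / 2 := by
      rw [how, if_neg (by rw [habsx]; exact not_le.2 hxc), ← hEx]
    have hB : Ex * (σ ^ 2 - c ^ 2 + x ^ 2) ≤ σ ^ 2 := by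
      have h := Real.add_one_le_exp (-((c ^ 2 - x ^ 2) / σ ^ 2))
      have h2 : Ex * (-((c ^ 2 - x ^ 2) / σ ^ 2) + 1)
          ≤ Ex * Real.exp (-((c ^ 2 - x ^ 2) / σ ^ 2)) :=
        mul_le_mul_of_nonneg_left h hExpos.le
      have h3 : Ex * Real.exp (-((c ^ 2 - x ^ 2) / σ ^ 2)) = 1 := by
        rw [hEx, ← Real.exp_add]; simp
      rw [h3] at h2
      have h4 := mul_le_mul_of_nonneg_left h2 hσ2.le
      have hkx : σ ^ 2 * ((c ^ 2 - x ^ 2) / σ ^ 2) = c ^ 2 - x ^ 2 :=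
        mul_div_cancel₀ _ hσ2.ne'
      calc Ex * (σ ^ 2 - c ^ 2 + x ^ 2)
          = -(Ex * (σ ^ 2 * ((c ^ 2 - x ^ 2) / σ ^ 2))) + σ ^ 2 * Ex := by
            rw [hkx]; ring
        _ = σ ^ 2 * (Ex * (-((c ^ 2 - x ^ 2) / σ ^ 2) + 1)) := by ring
        _ ≤ σ ^ 2 * 1 := h4
        _ = σ ^ 2 := mul_one _
    rcases le_or_gt z c with hzc | hzc
    · have hfz : how σ c z = z ^ 2 / 2 := by
        rw [how, if_pos (by rw [habsz]; exact hzc)]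
      rw [hprox, hfx, hfz]
      have hA : 0 < x ^ 2 - c ^ 2 := by nlinarith
      have hw : (x ^ 2 - c ^ 2) / 2 ≤ x * (x - z) := by nlinarith [sq_nonneg (x - c)]
      have hwpos : 0 ≤ σ ^ 2 / 2 + x * (x - z) := by nlinarith
      have h5 : Ex * (σ ^ 2 - c ^ 2 + x ^ 2) * (σ ^ 2 / 2 + x * (x - z))
          ≤ σ ^ 2 * (σ ^ 2 / 2 + x * (x - z)) :=
        mul_le_mul_of_nonneg_right hB hwpos
      have h6 : 0 ≤ (x ^ 2 - c ^ 2) * (x * (x - z) - (x ^ 2 - c ^ 2) / 2) :=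
        mul_nonneg hA.le (by linarith)
      have hσA : 0 < σ ^ 2 + (x ^ 2 - c ^ 2) := by linarith
      nlinarith [h5, h6, hσA]
    · have hfz : how σ c z = σ ^ 2 / 2 * (1 - Ez) + c ^ 2 / 2 := by
        rw [how, if_neg (by rw [habsz]; exact not_le.2 hzc), ← hEz]
      have h6 : Ex * (x ^ 2 - z ^ 2) + σ ^ 2 * Ex ≤ σ ^ 2 * Ez := by
        have h := Real.add_one_le_exp ((x ^ 2 - z ^ 2) / σ ^ 2)
        have h2 : Ex * ((x ^ 2 - z ^ 2) / σ ^ 2 + 1)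
            ≤ Ex * Real.exp ((x ^ 2 - z ^ 2) / σ ^ 2) :=
          mul_le_mul_of_nonneg_left h hExpos.le
        have h3 : Ex * Real.exp ((x ^ 2 - z ^ 2) / σ ^ 2) = Ez := by
          rw [hEx, hEz, ← Real.exp_add]; ring_nf
        rw [h3] at h2
        have h4 := mul_le_mul_of_nonneg_left h2 hσ2.le
        have hkxz : σ ^ 2 * ((x ^ 2 - z ^ 2) / σ ^ 2) = x ^ 2 - z ^ 2 :=
          mul_div_cancel₀ _ hσ2.ne'
        calc Ex * (x ^ 2 - z ^ 2) + σ ^ 2 * Ex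
            = Ex * (σ ^ 2 * ((x ^ 2 - z ^ 2) / σ ^ 2)) + σ ^ 2 * Ex := by
              rw [hkxz]
          _ = σ ^ 2 * (Ex * ((x ^ 2 - z ^ 2) / σ ^ 2 + 1)) := by ring
          _ ≤ σ ^ 2 * Ez := h4
      rw [hprox, hfx, hfz]
      nlinarith [h6, mul_nonneg (sub_nonneg.2 hE1) (sq_nonneg (x - z))]

private lemma key_x (σ c : ℝ) (hσ : 0 < σ) (hc : 0 < c) (x : ℝ) (hx : 0 ≤ x)
    (z : ℝ) :
    z * howProx σ c x - (z ^ 2 / 2 - how σ c z)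
      ≤ x * howProx σ c x - (x ^ 2 / 2 - how σ c x) := by
  have hy : 0 ≤ howProx σ c x := by
    apply mul_nonneg (le_max_left _ _)
    rcases eq_or_lt_of_le hx with h | h
    · simp [← h]
    · rw [Real.sign_of_pos h]; norm_num
  have h1 := key_nn σ c hσ hc x |z| hx (abs_nonneg z)
  rw [sq_abs, how_abs] at h1
  have h2 : z * howProx σ c x ≤ |z| * howProx σ c x :=
    mul_le_mul_of_nonneg_right (le_abs_self z) hy
  linarith

private lemma key (σ c : ℝ) (hσ : 0 < σ) (hc : 0 < c) (x z : ℝ) :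
    z * howProx σ c x - (z ^ 2 / 2 - how σ c z)
      ≤ x * howProx σ c x - (x ^ 2 / 2 - how σ c x) := by
  rcases le_or_gt 0 x with hx | hx
  · exact key_x σ c hσ hc x hx z
  · have h := key_x σ c hσ hc (-x) (by linarith) (-z)
    simp only [howProx_neg, how_neg, neg_sq, mul_neg, neg_mul, neg_neg] at h
    exact h

/-- Let `f(x) = x²/2 − l_{σ,c}(x)`. Then (i) for every `y` the set
`{x·y − f(x) : x ∈ ℝ}` is bounded above, so the implicit regularizer
`φ(y) = sup_x (x·y − f(x)) − y²/2` is a well-defined real number; (ii) for every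
`x`, `inf_y ((x−y)²/2 + φ(y)) = l_{σ,c}(x)`, i.e. `l_{σ,c}(x)` is a lower bound of
`(x−y)²/2 + φ(y)` over `y`; and (iii) the infimum is attained at
`y = max{0, |x| − |x|·e^{(c²−x²)/σ²}}·sign(x)`. -/
theorem how_implicit_regularizer (σ c : ℝ) (hσ : 0 < σ) (hc : 0 < c)
    (f : ℝ → ℝ) (hf : ∀ x : ℝ, f x = x ^ 2 / 2 - how σ c x)
    (φ : ℝ → ℝ)
    (hφ : ∀ y : ℝ, φ y = sSup (Set.range fun x : ℝ => x * y - f x) - y ^ 2 / 2) :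
    (∀ y : ℝ, BddAbove (Set.range fun x : ℝ => x * y - f x)) ∧
    (∀ x y : ℝ, how σ c x ≤ (x - y) ^ 2 / 2 + φ y) ∧
    (∀ x : ℝ, (x - howProx σ c x) ^ 2 / 2 + φ (howProx σ c x) = how σ c x) := by
  have hub : ∀ x : ℝ, how σ c x ≤ c ^ 2 / 2 + σ ^ 2 / 2 := by
    intro x
    rw [how]
    split
    · next h =>
      have h2 : |x| ^ 2 ≤ c ^ 2 := by nlinarith [abs_nonneg x]
      rw [sq_abs] at h2
      nlinarith [sq_nonneg σ]
    · next h =>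
      have := Real.exp_pos ((c ^ 2 - x ^ 2) / σ ^ 2)
      nlinarith
  have hbdd : ∀ y : ℝ, BddAbove (Set.range fun x : ℝ => x * y - f x) := by
    intro y
    refine ⟨y ^ 2 / 2 + c ^ 2 / 2 + σ ^ 2 / 2, ?_⟩
    rintro _ ⟨x, rfl⟩
    simp only [hf]
    have := hub x
    nlinarith [sq_nonneg (x - y)]
  refine ⟨hbdd, ?_, ?_⟩
  · intro x y
    have hmem : x * y - f x ≤ sSup (Set.range fun x : ℝ => x * y - f x) :=
      le_csSup (hbdd y) ⟨x, rfl⟩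
    rw [hf] at hmem
    rw [hφ]
    nlinarith [hmem]
  · intro x
    set y := howProx σ c x with hy
    have hsup : sSup (Set.range fun z : ℝ => z * y - f z) = x * y - f x := by
      apply le_antisymm
      · apply csSup_le (Set.range_nonempty _)
        rintro _ ⟨z, rfl⟩
        simp only [hf]
        exact key σ c hσ hc x z
      · exact le_csSup (hbdd y) ⟨x, rfl⟩
    rw [hφ, hsup, hf]
    ring
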